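/- arXiv:2312.17112 — 4 statements merged into one kernel-verified Lean document; each statement's English description precedes it below -/
import Mathlib

section
/- Let (N,d) be a CAT(0) space, P,Q,R,S ∈ N, and let P_t = γ_{PS}(t) and Q_s = γ_{QR}(s) be constant-speed geodesics with γ_{PS}(0)=P, γ_{PS}(1)=S, γ_{QR}(0)=Q, γ_{QR}(1)=R. Let P̄,Q̄,R̄,S̄ ∈ ℝ² be a comparison quadrilateral (i.e., |P̄−Q̄| = d(P,Q), |Q̄−R̄| = d(Q,R), |R̄−S̄| = d(R,S), |S̄−P̄| = d(S,P), with the diagonals also dominating: |P̄−R̄| ≥ d(P,R), |Q̄−S̄| ≥ d(Q,S)), and set P̄_t = (1−t)P̄ + tS̄, Q̄_s = (1−s)Q̄ + sR̄. Then d(P_t, Q_s) ≤ |P̄_t − Q̄_s| for all t,s ∈ [0,1]. -/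
/-- A constant-speed geodesic from `p` to `q`, parametrized on `[0,1]`. -/
def IsGeodesic {N : Type*} [MetricSpace N] (g : ℝ → N) (p q : N) : Prop :=
  g 0 = p ∧ g 1 = q ∧
    ∀ s ∈ Set.Icc (0:ℝ) 1, ∀ t ∈ Set.Icc (0:ℝ) 1, dist (g s) (g t) = |s - t| * dist p q

/-- A complete geodesic metric space is CAT(0) if every geodesic triangle is at least as
thin as its Euclidean comparison triangle; equivalently, along every geodesic `g` from
`p` to `q` the comparison inequality
`d(x, g t)² ≤ (1−t)d(x,p)² + t d(x,q)² − t(1−t)d(p,q)²` holds. -/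
def IsCAT0 (N : Type*) [MetricSpace N] [CompleteSpace N] : Prop :=
  (∀ p q : N, ∃ g : ℝ → N, IsGeodesic g p q) ∧
  ∀ (p q : N) (g : ℝ → N), IsGeodesic g p q → ∀ x : N, ∀ t ∈ Set.Icc (0:ℝ) 1,
    dist x (g t) ^ 2 ≤ (1 - t) * dist x p ^ 2 + t * dist x q ^ 2
      - t * (1 - t) * dist p q ^ 2

/-!
Apply the CAT(0) inequality along `P_t` with base point `Q_s`, and then along `Q_s` with
base points `P` and `S`. This bounds `d(P_t, Q_s)²` by an expression in the six distances
between `P, Q, R, S`, and in the plane the same three steps hold with equality. The two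
diagonals enter that expression with the nonnegative weights `(1-t)s` and `t(1-s)`, so
enlarging them to those of the comparison quadrilateral only increases it.
-/

def quadrilateralBound (t s dPQ dQR dRS dSP dPR dQS : ℝ) : ℝ :=
  (1 - t) * ((1 - s) * dPQ ^ 2 + s * dPR ^ 2 - s * (1 - s) * dQR ^ 2)
    + t * ((1 - s) * dQS ^ 2 + s * dRS ^ 2 - s * (1 - s) * dQR ^ 2)
    - t * (1 - t) * dSP ^ 2

lemma quadrilateralBound_mono_diagonals {t s dPQ dQR dRS dSP dPR dQS dPR' dQS' : ℝ}
    (ht : t ∈ Set.Icc (0:ℝ) 1) (hs : s ∈ Set.Icc (0:ℝ) 1)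
    (hPR₀ : 0 ≤ dPR) (hPR : dPR ≤ dPR') (hQS₀ : 0 ≤ dQS) (hQS : dQS ≤ dQS') :
    quadrilateralBound t s dPQ dQR dRS dSP dPR dQS
      ≤ quadrilateralBound t s dPQ dQR dRS dSP dPR' dQS' := by
  obtain ⟨ht₀, ht₁⟩ := ht
  obtain ⟨hs₀, hs₁⟩ := hs
  have hPR_sq : (1 - t) * s * dPR ^ 2 ≤ (1 - t) * s * dPR' ^ 2 := by gcongr
  have hQS_sq : t * (1 - s) * dQS ^ 2 ≤ t * (1 - s) * dQS' ^ 2 := by gcongr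
  unfold quadrilateralBound
  linarith

lemma IsCAT0.dist_sq_le_quadrilateralBound {N : Type*} [MetricSpace N] [CompleteSpace N]
    (hN : IsCAT0 N) {P Q R S : N} {gPS gQR : ℝ → N}
    (hPS : IsGeodesic gPS P S) (hQR : IsGeodesic gQR Q R)
    {t s : ℝ} (ht : t ∈ Set.Icc (0:ℝ) 1) (hs : s ∈ Set.Icc (0:ℝ) 1) :
    dist (gPS t) (gQR s) ^ 2 ≤ quadrilateralBound t s
      (dist P Q) (dist Q R) (dist R S) (dist S P) (dist P R) (dist Q S) := by
  have along_PS := hN.2 P S gPS hPS (gQR s) t ht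
  have along_QR_from_P := hN.2 Q R gQR hQR P s hs
  have along_QR_from_S := hN.2 Q R gQR hQR S s hs
  rw [dist_comm (gQR s), dist_comm (gQR s), dist_comm (gQR s)] at along_PS
  rw [dist_comm S Q, dist_comm S R] at along_QR_from_S
  have h₁ := mul_le_mul_of_nonneg_left along_QR_from_P (sub_nonneg.2 ht.2)
  have h₂ := mul_le_mul_of_nonneg_left along_QR_from_S ht.1
  unfold quadrilateralBound
  rw [dist_comm S P]
  linarith

lemma dist_sq_convexCombination {E : Type*} [NormedAddCommGroup E] [InnerProductSpace ℝ E]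
    (x a b : E) (t : ℝ) :
    dist x ((1 - t) • a + t • b) ^ 2
      = (1 - t) * dist x a ^ 2 + t * dist x b ^ 2 - t * (1 - t) * dist a b ^ 2 := by
  have hx : x - ((1 - t) • a + t • b) = (1 - t) • (x - a) + t • (x - b) := by module
  have hab : a - b = (x - b) - (x - a) := by abel
  simp only [dist_eq_norm, hx, hab, ← real_inner_self_eq_norm_sq, inner_add_left,
    inner_add_right, inner_sub_left, inner_sub_right, real_inner_smul_left,
    real_inner_smul_right]
  ring

lemma dist_sq_convexCombinations_eq_quadrilateralBound {E : Type*} [NormedAddCommGroup E]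
    [InnerProductSpace ℝ E] (P Q R S : E) (t s : ℝ) :
    dist ((1 - t) • P + t • S) ((1 - s) • Q + s • R) ^ 2 = quadrilateralBound t s
      (dist P Q) (dist Q R) (dist R S) (dist S P) (dist P R) (dist Q S) := by
  rw [dist_comm, dist_sq_convexCombination, dist_comm _ P, dist_comm _ S,
    dist_sq_convexCombination, dist_sq_convexCombination, quadrilateralBound,
    dist_comm S Q, dist_comm S R, dist_comm S P]

/-- Quadrilateral comparison in a CAT(0) space (Korevaar–Schoen, Thm 2.1.2): for a
quadrilateral `P,Q,R,S` with comparison quadrilateral `P̄,Q̄,R̄,S̄ ⊂ ℝ²` (same side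
lengths, dominating diagonals), points on the geodesics `P_t` from `P` to `S` and `Q_s`
from `Q` to `R` satisfy `d(P_t, Q_s) ≤ |P̄_t − Q̄_s|`. -/
theorem cat0_quadrilateral_comparison {N : Type*} [MetricSpace N] [CompleteSpace N]
    (hN : IsCAT0 N) (P Q R S : N) (gPS gQR : ℝ → N)
    (hPS : IsGeodesic gPS P S) (hQR : IsGeodesic gQR Q R)
    (Pb Qb Rb Sb : EuclideanSpace ℝ (Fin 2))
    (hPQ : dist Pb Qb = dist P Q) (hQR' : dist Qb Rb = dist Q R)
    (hRS : dist Rb Sb = dist R S) (hSP : dist Sb Pb = dist S P)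
    (hPR : dist P R ≤ dist Pb Rb) (hQS : dist Q S ≤ dist Qb Sb)
    (t s : ℝ) (ht : t ∈ Set.Icc (0:ℝ) 1) (hs : s ∈ Set.Icc (0:ℝ) 1) :
    dist (gPS t) (gQR s) ≤ ‖((1 - t) • Pb + t • Sb) - ((1 - s) • Qb + s • Rb)‖ := by
  rw [← dist_eq_norm, ← pow_le_pow_iff_left₀ dist_nonneg dist_nonneg two_ne_zero,
    dist_sq_convexCombinations_eq_quadrilateralBound, hPQ, hQR', hRS, hSP]
  calc dist (gPS t) (gQR s) ^ 2
      ≤ quadrilateralBound t s (dist P Q) (dist Q R) (dist R S) (dist S P)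
          (dist P R) (dist Q S) := hN.dist_sq_le_quadrilateralBound hPS hQR ht hs
    _ ≤ quadrilateralBound t s (dist P Q) (dist Q R) (dist R S) (dist S P)
          (dist Pb Rb) (dist Qb Sb) :=
        quadrilateralBound_mono_diagonals ht hs dist_nonneg hPR dist_nonneg hQS
end

section
/- Let (N,d) be a CAT(0) space, P,Q,R,S ∈ N, with geodesics P_t from P to S and Q_t from Q to R parametrized proportionally to arclength on [0,1]. Write d_{PQ} = d(P,Q) etc. Then for all t, s ∈ [0,1]: d²(P_t, Q_t) ≤ (1−t) d_{PQ}² + t d_{RS}² − t(1−t)[ s(d_{SP} − d_{QR})² + (1−s)(d_{RS} − d_{PQ})² ]. -/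
set_option maxHeartbeats 1000000



private lemma le_of_sq_le' (A B : ℝ) (hA : 0 ≤ A) (hB : 0 ≤ B) (h : A^2 ≤ B^2) : A ≤ B := by
  have := Real.sqrt_le_sqrt h
  rwa [Real.sqrt_sq hA, Real.sqrt_sq hB] at this

/-- Crossing condition implies the planar sign inequality. -/
private lemma cross_lemma (x₁ y₁ x₂ y₂ a p l : ℝ) (hy₁ : 0 ≤ y₁) (hy₂ : y₂ ≤ 0)
    (ha : a^2 = x₁^2 + y₁^2) (hp : p^2 = x₂^2 + y₂^2) (ha0 : 0 ≤ a) (hp0 : 0 ≤ p)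
    (hl0 : 0 ≤ l) (hl1 : l ≤ 1) (hly : (1-l)*y₁ + l*y₂ = 0)
    (hlx : (1-l)*x₁ + l*x₂ ≤ 0) :
    x₁*p + a*x₂ ≤ 0 := by
  have hkey : x₂*y₁ ≤ x₁*y₂ := by
    rcases eq_or_lt_of_le hl1 with h1 | h1
    · subst h1
      have hy2 : y₂ = 0 := by linarith
      subst hy2
      have hx2 : x₂ ≤ 0 := by linarith
      nlinarith [mul_nonpos_of_nonpos_of_nonneg hx2 hy₁]
    · have h2 : ((1-l)*x₁ + l*x₂) * (-y₂) ≤ 0 :=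
        mul_nonpos_of_nonpos_of_nonneg hlx (by linarith)
      have h3 : x₂ * ((1-l)*y₁ + l*y₂) = 0 := by rw [hly, mul_zero]
      have h4 : (1-l) * (x₂*y₁ - x₁*y₂) ≤ 0 := by nlinarith [h2, h3]
      by_contra hcon
      push_neg at hcon
      nlinarith [mul_pos (sub_pos.mpr h1) (sub_pos.mpr hcon)]
  rcases le_or_gt x₁ 0 with hx₁ | hx₁
  · rcases le_or_gt x₂ 0 with hx₂ | hx₂
    · have h5 : x₁*p ≤ 0 := mul_nonpos_of_nonpos_of_nonneg hx₁ hp0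
      have h6 : a*x₂ ≤ 0 := mul_nonpos_of_nonneg_of_nonpos ha0 hx₂
      linarith
    · have h4 : 0 ≤ x₂*y₁ := mul_nonneg hx₂.le hy₁
      have h6 : (a*x₂)^2 ≤ ((-x₁)*p)^2 := by nlinarith [hkey, h4]
      have := le_of_sq_le' _ _ (mul_nonneg ha0 hx₂.le) (mul_nonneg (by linarith) hp0) h6
      linarith
  · rcases le_or_gt x₂ 0 with hx₂ | hx₂
    · have h4 : x₁*y₂ ≤ 0 := mul_nonpos_of_nonneg_of_nonpos hx₁.le hy₂
      have h6 : (x₁*p)^2 ≤ (a*(-x₂))^2 := by nlinarith [hkey, h4]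
      have := le_of_sq_le' _ _ (mul_nonneg hx₁.le hp0) (mul_nonneg ha0 (by linarith)) h6
      linarith
    · exfalso
      rcases eq_or_lt_of_le hl0 with h0 | h0
      · rw [← h0] at hlx; linarith
      · nlinarith [mul_pos h0 hx₂, mul_nonneg (sub_nonneg.mpr hl1) hx₁.le]

private lemma side_lemma (x₁ y₁ x₂ y₂ v a p q : ℝ) (hv : 0 ≤ v)
    (ha : a^2 = x₁^2 + y₁^2) (hp : p^2 = x₂^2 + y₂^2) (hq : q^2 = (x₁-v)^2 + y₁^2)
    (ha0 : 0 ≤ a) (hp0 : 0 ≤ p) (hq0 : 0 ≤ q) (hcross : x₁*p + a*x₂ ≤ 0) :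
    a*p + v*x₂ ≤ p*q := by
  rcases le_or_gt (a*p + v*x₂) 0 with h | h
  · exact h.trans (mul_nonneg hp0 hq0)
  · have hsq : (a*p + v*x₂)^2 ≤ (p*q)^2 := by
      have hid : (p*q)^2 - (a*p+v*x₂)^2 = v^2*y₂^2 - 2*v*p*(x₁*p + a*x₂) := by
        linear_combination p^2*hq - p^2*ha + v^2*hp
      nlinarith [hid, sq_nonneg (v*y₂),
        mul_nonneg (mul_nonneg hv hp0) (neg_nonneg.mpr hcross)]
    exact le_of_sq_le' _ _ h.le (mul_nonneg hp0 hq0) hsq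

private lemma quad_real (x₁ y₁ x₂ y₂ v a p q b u : ℝ)
    (hy₁ : 0 ≤ y₁) (hy₂ : y₂ ≤ 0) (hv : 0 ≤ v)
    (ha0 : 0 ≤ a) (hp0 : 0 ≤ p) (hq0 : 0 ≤ q) (hb0 : 0 ≤ b) (hu0 : 0 ≤ u)
    (ha : a^2 = x₁^2 + y₁^2) (hp : p^2 = x₂^2 + y₂^2)
    (hq : q^2 = (x₁-v)^2 + y₁^2) (hb : b^2 = (x₂-v)^2 + y₂^2)
    (hu : ∀ t, t ∈ Set.Icc (0:ℝ) 1 →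
      u ≤ Real.sqrt ((1-t)*a^2 + t*q^2 - t*(1-t)*v^2)
          + Real.sqrt ((1-t)*p^2 + t*b^2 - t*(1-t)*v^2)) :
    u^2 + v^2 ≤ a^2 + b^2 + 2*p*q := by
  obtain ⟨l, hl0, hl1, hly⟩ : ∃ l : ℝ, 0 ≤ l ∧ l ≤ 1 ∧ (1-l)*y₁ + l*y₂ = 0 := by
    rcases eq_or_lt_of_le (by linarith : y₂ ≤ y₁) with h | h
    · exact ⟨1/2, by norm_num, by norm_num, by linarith⟩
    · have hne : y₁ - y₂ ≠ 0 := ne_of_gt (by linarith)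
      refine ⟨y₁/(y₁-y₂), div_nonneg hy₁ (by linarith), ?_, ?_⟩
      · rw [div_le_one (by linarith)]; linarith
      · field_simp
        ring
  have hly' : y₁ = l*(y₁-y₂) := by linear_combination hly
  have hly'' : y₂ = (1-l)*(y₂-y₁) := by linear_combination hly
  rcases lt_or_ge ((1-l)*x₁ + l*x₂) 0 with hx | hx
  · -- crossing left of 0 : use t = 0
    have h0 := hu 0 ⟨le_refl 0, by norm_num⟩
    simp only [sub_zero, one_mul, zero_mul, mul_zero, add_zero, zero_add] at h0
    rw [Real.sqrt_sq ha0, Real.sqrt_sq hp0] at h0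
    have hcross := cross_lemma x₁ y₁ x₂ y₂ a p l hy₁ hy₂ ha hp ha0 hp0 hl0 hl1 hly hx.le
    have hside := side_lemma x₁ y₁ x₂ y₂ v a p q hv ha hp hq ha0 hp0 hq0 hcross
    nlinarith [h0, hside, hu0, hb, hp]
  rcases lt_or_ge v ((1-l)*x₁ + l*x₂) with hxv | hxv
  · -- crossing right of v : use t = 1
    have h1 := hu 1 ⟨by norm_num, le_refl 1⟩
    simp only [sub_self, one_mul, zero_mul, mul_zero, mul_one, add_zero, zero_add,
      sub_zero] at h1
    rw [Real.sqrt_sq hq0, Real.sqrt_sq hb0] at h1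
    have hcross := cross_lemma (v-x₂) (-y₂) (v-x₁) (-y₁) b q (1-l)
      (by linarith) (by linarith) (by linear_combination hb) (by linear_combination hq)
      hb0 hq0 (by linarith) (by linarith) (by linear_combination -hly)
      (by nlinarith [hxv])
    have hside := side_lemma (v-x₂) (-y₂) (v-x₁) (-y₁) v b q p hv
      (by linear_combination hb) (by linear_combination hq) (by linear_combination hp)
      hb0 hq0 hp0 hcross
    nlinarith [h1, hside, hu0, ha, hq]
  · -- crossing between : use t with t*v = (1-l)*x₁ + l*x₂
    obtain ⟨t, ht0, ht1, htv⟩ :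
        ∃ t : ℝ, 0 ≤ t ∧ t ≤ 1 ∧ t*v = (1-l)*x₁ + l*x₂ := by
      rcases eq_or_lt_of_le hv with h | h
      · refine ⟨0, le_refl 0, by norm_num, ?_⟩
        have : (1-l)*x₁ + l*x₂ = 0 := le_antisymm (by rw [← h] at hxv; exact hxv) hx
        rw [this]; ring
      · refine ⟨((1-l)*x₁ + l*x₂)/v, div_nonneg hx h.le, by rw [div_le_one h]; exact hxv,
          div_mul_cancel₀ _ (ne_of_gt h)⟩
    have hmid := hu t ⟨ht0, ht1⟩
    have hW0 : 0 ≤ (x₁-x₂)^2 + (y₁-y₂)^2 := by positivity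
    have hF : (1-t)*a^2 + t*q^2 - t*(1-t)*v^2 = l^2*((x₁-x₂)^2 + (y₁-y₂)^2) := by
      linear_combination (1-t)*ha + t*hq + (t*v + ((1-l)*x₁+l*x₂) - 2*x₁)*htv
        + (y₁ + l*(y₁-y₂))*hly'
    have hG : (1-t)*p^2 + t*b^2 - t*(1-t)*v^2 = (1-l)^2*((x₁-x₂)^2 + (y₁-y₂)^2) := by
      linear_combination (1-t)*hp + t*hb + (t*v + ((1-l)*x₁+l*x₂) - 2*x₂)*htv
        + (y₂ + (1-l)*(y₂-y₁))*hly''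
    rw [hF, hG, Real.sqrt_mul (sq_nonneg l) _, Real.sqrt_mul (sq_nonneg (1-l)) _,
      Real.sqrt_sq hl0, Real.sqrt_sq (by linarith : (0:ℝ) ≤ 1-l)] at hmid
    have huW : u ≤ Real.sqrt ((x₁-x₂)^2 + (y₁-y₂)^2) := by
      have : l*Real.sqrt ((x₁-x₂)^2 + (y₁-y₂)^2)
          + (1-l)*Real.sqrt ((x₁-x₂)^2 + (y₁-y₂)^2)
          = Real.sqrt ((x₁-x₂)^2 + (y₁-y₂)^2) := by ring
      linarith [hmid, this]
    have hu2 : u^2 ≤ (x₁-x₂)^2 + (y₁-y₂)^2 := by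
      calc u^2 ≤ (Real.sqrt ((x₁-x₂)^2 + (y₁-y₂)^2))^2 := pow_le_pow_left₀ hu0 huW 2
        _ = (x₁-x₂)^2 + (y₁-y₂)^2 := Real.sq_sqrt hW0
    have hCS : -(p*q) ≤ x₂*(x₁-v) + y₂*y₁ := by
      have h1 : (x₂*(x₁-v) + y₂*y₁)^2 ≤ (p*q)^2 := by
        have h2 : (p*q)^2 = (x₂^2+y₂^2)*((x₁-v)^2+y₁^2) := by rw [mul_pow, hp, hq]
        nlinarith [sq_nonneg (x₂*y₁ - y₂*(x₁-v)), h2]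
      have h3 := le_of_sq_le' |x₂*(x₁-v) + y₂*y₁| (p*q) (abs_nonneg _)
        (mul_nonneg hp0 hq0) (by rwa [sq_abs])
      linarith [neg_abs_le (x₂*(x₁-v) + y₂*y₁), h3]
    nlinarith [hu2, hCS, ha, hb]

/-- Purely real version with triangle-inequality hypotheses. -/
private lemma quad_real2 (v a p q b u : ℝ)
    (hv : 0 < v) (ha0 : 0 ≤ a) (hp0 : 0 ≤ p) (hq0 : 0 ≤ q) (hb0 : 0 ≤ b) (hu0 : 0 ≤ u)
    (tQ1 : q ≤ a + v) (tQ2 : a ≤ q + v) (tQ3 : v ≤ a + q)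
    (tS1 : b ≤ p + v) (tS2 : p ≤ b + v) (tS3 : v ≤ p + b)
    (hu : ∀ t, t ∈ Set.Icc (0:ℝ) 1 →
      u ≤ Real.sqrt ((1-t)*a^2 + t*q^2 - t*(1-t)*v^2)
          + Real.sqrt ((1-t)*p^2 + t*b^2 - t*(1-t)*v^2)) :
    u^2 + v^2 ≤ a^2 + b^2 + 2*p*q := by
  set x₁ := (a^2+v^2-q^2)/(2*v) with hx₁def
  set x₂ := (p^2+v^2-b^2)/(2*v) with hx₂def
  have hx₁ : x₁^2 ≤ a^2 := by
    rw [hx₁def, div_pow, div_le_iff₀ (by positivity)]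
    nlinarith [mul_nonneg (mul_nonneg (mul_nonneg
      (by linarith : (0:ℝ) ≤ a+v-q) (by linarith : (0:ℝ) ≤ a+v+q))
      (by linarith : (0:ℝ) ≤ q+a-v)) (by linarith : (0:ℝ) ≤ q-a+v)]
  have hx₂ : x₂^2 ≤ p^2 := by
    rw [hx₂def, div_pow, div_le_iff₀ (by positivity)]
    nlinarith [mul_nonneg (mul_nonneg (mul_nonneg
      (by linarith : (0:ℝ) ≤ p+v-b) (by linarith : (0:ℝ) ≤ p+v+b))
      (by linarith : (0:ℝ) ≤ b+p-v)) (by linarith : (0:ℝ) ≤ b-p+v)]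
  have h2vx₁ : 2*v*x₁ = a^2+v^2-q^2 := by rw [hx₁def]; field_simp
  have h2vx₂ : 2*v*x₂ = p^2+v^2-b^2 := by rw [hx₂def]; field_simp
  set y₁ := Real.sqrt (a^2 - x₁^2) with hy₁def
  set y₂ := -Real.sqrt (p^2 - x₂^2) with hy₂def
  have hy₁sq : y₁^2 = a^2 - x₁^2 := Real.sq_sqrt (by linarith)
  have hy₂sq : y₂^2 = p^2 - x₂^2 := by rw [hy₂def, neg_sq]; exact Real.sq_sqrt (by linarith)
  exact quad_real x₁ y₁ x₂ y₂ v a p q b u (Real.sqrt_nonneg _)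
    (neg_nonpos_of_nonneg (Real.sqrt_nonneg _)) hv.le ha0 hp0 hq0 hb0 hu0
    (by linear_combination -hy₁sq) (by linear_combination -hy₂sq)
    (by linear_combination -hy₁sq + h2vx₁) (by linear_combination -hy₂sq + h2vx₂) hu

/-- The CAT(0) quadrilateral (quasilinearization) inequality. -/
private lemma quad_ineq {N : Type*} [MetricSpace N] [CompleteSpace N] (hN : IsCAT0 N)
    (P Q R S : N) :
    dist Q S ^ 2 + dist P R ^ 2
      ≤ dist P Q ^ 2 + dist R S ^ 2 + 2 * dist P S * dist Q R := by
  rcases eq_or_ne (dist P R) 0 with hv0 | hv0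
  · have hPR : P = R := by rwa [dist_eq_zero] at hv0
    subst hPR
    have h1 := dist_triangle Q P S
    rw [dist_comm Q P] at h1
    have hu2 : dist Q S ^ 2 ≤ (dist P Q + dist P S)^2 :=
      pow_le_pow_left₀ dist_nonneg h1 2
    rw [hv0, dist_comm Q P]
    nlinarith [hu2]
  · have hv : 0 < dist P R := (dist_nonneg).lt_of_ne' hv0
    obtain ⟨g, hg⟩ := hN.1 P R
    have key := quad_real2 (dist P R) (dist P Q) (dist P S) (dist Q R) (dist R S)
      (dist Q S) hv dist_nonneg dist_nonneg dist_nonneg dist_nonneg dist_nonneg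
      (by rw [dist_comm P Q]; exact dist_triangle Q P R)
      (by rw [dist_comm Q R, add_comm]; exact dist_triangle P R Q)
      (dist_triangle P Q R)
      (by rw [dist_comm P R, add_comm]; exact dist_triangle R P S)
      (by rw [add_comm]; exact dist_triangle P R S)
      (by rw [dist_comm R S]; exact dist_triangle P S R)
      ?_
    · linarith [key]
    · intro t htt
      have hQ := hN.2 P R g hg Q t htt
      rw [dist_comm Q P] at hQ
      have hS := hN.2 P R g hg S t htt
      rw [dist_comm S P, dist_comm S R] at hS
      have hA1 : (0:ℝ) ≤ (1-t)*dist P Q^2 + t*dist Q R^2 - t*(1-t)*dist P R^2 :=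
        le_trans (sq_nonneg _) hQ
      have hA2 : (0:ℝ) ≤ (1-t)*dist P S^2 + t*dist R S^2 - t*(1-t)*dist P R^2 :=
        le_trans (sq_nonneg _) hS
      calc dist Q S ≤ dist Q (g t) + dist (g t) S := dist_triangle _ _ _
        _ ≤ _ + _ := by
            apply add_le_add
            · exact (Real.le_sqrt dist_nonneg hA1).mpr hQ
            · rw [dist_comm (g t) S]
              exact (Real.le_sqrt dist_nonneg hA2).mpr hS

/-- Korevaar–Schoen Corollary 2.1.3, first inequality: for a quadrilateral `P,Q,R,S` in
a CAT(0) space, with `P_t` the geodesic from `P` to `S` and `Q_t` the geodesic from `Q`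
to `R`, for all `t, s ∈ [0,1]`:
`d²(P_t,Q_t) ≤ (1−t)d_{PQ}² + t d_{RS}² − t(1−t)[s(d_{SP}−d_{QR})² + (1−s)(d_{RS}−d_{PQ})²]`. -/
theorem cat0_quadrilateral_interpolation {N : Type*} [MetricSpace N] [CompleteSpace N]
    (hN : IsCAT0 N) (P Q R S : N) (gPS gQR : ℝ → N)
    (hPS : IsGeodesic gPS P S) (hQR : IsGeodesic gQR Q R)
    (t s : ℝ) (ht : t ∈ Set.Icc (0:ℝ) 1) (hs : s ∈ Set.Icc (0:ℝ) 1) :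
    dist (gPS t) (gQR t) ^ 2 ≤
      (1 - t) * dist P Q ^ 2 + t * dist R S ^ 2
        - t * (1 - t) * (s * (dist S P - dist Q R) ^ 2
          + (1 - s) * (dist R S - dist P Q) ^ 2) := by
  obtain ⟨ht0, ht1⟩ := ht
  obtain ⟨hs0, hs1⟩ := hs
  have h1 := hN.2 Q R gQR hQR (gPS t) t ⟨ht0, ht1⟩
  have h2 := hN.2 P S gPS hPS Q t ⟨ht0, ht1⟩
  have h3 := hN.2 P S gPS hPS R t ⟨ht0, ht1⟩
  rw [dist_comm Q (gPS t), dist_comm Q P] at h2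
  rw [dist_comm R (gPS t), dist_comm R P] at h3
  have hA := quad_ineq hN P Q R S
  have hB := quad_ineq hN P S R Q
  rw [dist_comm S Q, dist_comm R Q, dist_comm S R] at hB
  rw [dist_comm S P]
  have key : dist (gPS t) (gQR t) ^ 2 ≤
      (1-t)^2 * dist P Q ^ 2 + t^2 * dist R S ^ 2
        + t*(1-t) * (dist Q S ^ 2 + dist P R ^ 2)
        - t*(1-t) * (dist P S ^ 2 + dist Q R ^ 2) := by
    nlinarith [h1, mul_le_mul_of_nonneg_left h2 (by linarith : (0:ℝ) ≤ 1-t),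
      mul_le_mul_of_nonneg_left h3 ht0]
  have hG : dist Q S ^ 2 + dist P R ^ 2 ≤
      dist P Q ^ 2 + dist R S ^ 2 + dist P S ^ 2 + dist Q R ^ 2
        - s * (dist P S - dist Q R)^2 - (1-s) * (dist R S - dist P Q)^2 := by
    nlinarith [mul_le_mul_of_nonneg_left hA hs0,
      mul_le_mul_of_nonneg_left hB (by linarith : (0:ℝ) ≤ 1-s)]
  nlinarith [key, mul_le_mul_of_nonneg_left hG (mul_nonneg ht0 (by linarith : (0:ℝ) ≤ 1-t))]
end

section
/- Let (N,d) be a CAT(0) space, P,Q,R,S ∈ N, with Q_t the constant-speed geodesic from Q to R on [0,1]. Then for all t, s ∈ [0,1]: d²(P, Q_t) + d²(S, Q_{1−t}) ≤ d_{PQ}² + d_{RS}² + t(d_{SP}² − d_{QR}²) + 2t² d_{QR}² − t[ s(d_{SP} − d_{QR})² + (1−s)(d_{RS} − d_{PQ})² ], where d_{AB} = d(A,B). -/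
/-!
Summing the CAT(0) comparison inequality for `P` at `Q_t` and for `S` at `Q_{1-t}` bounds the left
side by `d_{PQ}² + d_{RS}² + t (d_{PR}² + d_{QS}² − d_{PQ}² − d_{RS}²) − 2t(1−t) d_{QR}²`.
Reshetnyak's quadrilateral inequality `d_{PR}² + d_{QS}² ≤ d_{PQ}² + d_{RS}² + 2 d_{PS} d_{QR}`,
applied to `PQRS` and to `QRSP` and averaged with weights `s` and `1 − s`, then bounds the middle term.
-/

namespace IsCAT0

variable {N : Type*} [MetricSpace N] [CompleteSpace N]

theorem dist_sq_le (hN : IsCAT0 N) {g : ℝ → N} {p q : N} (hg : IsGeodesic g p q) (x : N) {t : ℝ}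
    (ht : t ∈ Set.Icc (0 : ℝ) 1) :
    dist x (g t) ^ 2 ≤ (1 - t) * dist x p ^ 2 + t * dist x q ^ 2 - t * (1 - t) * dist p q ^ 2 :=
  hN.2 p q g hg x t ht

theorem weighted_quadrilateral (hN : IsCAT0 N) (P Q R S : N) {u v : ℝ} (hu : 0 ≤ u) (hv : 0 ≤ v)
    (huv : u + v = 1) :
    u * v * (dist P R ^ 2 + dist Q S ^ 2) ≤
      v ^ 2 * dist Q R ^ 2 + u * v * (dist P Q ^ 2 + dist R S ^ 2) + u ^ 2 * dist P S ^ 2 := by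
  obtain rfl : v = 1 - u := by linarith
  have hu' : u ∈ Set.Icc (0 : ℝ) 1 := ⟨hu, by linarith⟩
  -- compare the point `α u` of a geodesic from `R` to `P` with `Q`, `S` and a geodesic from `Q` to `S`
  obtain ⟨α, hα⟩ := hN.1 R P
  obtain ⟨β, hβ⟩ := hN.1 Q S
  have hm := hN.dist_sq_le hβ (α u) hu'
  have hQ := mul_le_mul_of_nonneg_left (hN.dist_sq_le hα Q hu') hv
  have hS := mul_le_mul_of_nonneg_left (hN.dist_sq_le hα S hu') hu
  rw [dist_comm (α u) Q, dist_comm (α u) S] at hm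
  rw [dist_comm Q P, dist_comm R P] at hQ
  rw [dist_comm S R, dist_comm S P, dist_comm R P] at hS
  linarith [sq_nonneg (dist (α u) (β u))]

theorem dist_sq_add_dist_sq_le (hN : IsCAT0 N) (P Q R S : N) :
    dist P R ^ 2 + dist Q S ^ 2 ≤ dist P Q ^ 2 + dist R S ^ 2 + 2 * dist P S * dist Q R := by
  rcases eq_or_ne Q R with rfl | hQR
  · simp
  rcases eq_or_ne P S with rfl | hPS
  · simp [dist_comm, add_comm]
  set a := dist Q R
  set b := dist P S
  have ha : 0 < a := dist_pos.2 hQR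
  have hb : 0 < b := dist_pos.2 hPS
  -- the weights `u = a/(a+b)`, `v = b/(a+b)` make the two squared terms equal to `u v a b`
  have h := hN.weighted_quadrilateral P Q R S (u := a / (a + b)) (v := b / (a + b))
    (by positivity) (by positivity) (by field_simp)
  have key : a / (a + b) * (b / (a + b)) * (dist P R ^ 2 + dist Q S ^ 2) ≤
      a / (a + b) * (b / (a + b)) * (dist P Q ^ 2 + dist R S ^ 2 + 2 * b * a) := by
    convert h using 1; ring
  exact le_of_mul_le_mul_left key (by positivity)

end IsCAT0

/-- Korevaar–Schoen Corollary 2.1.3, second inequality: for a quadrilateral `P,Q,R,S` in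
a CAT(0) space, with `Q_t` the constant-speed geodesic from `Q` to `R` on `[0,1]`, for
all `t, s ∈ [0,1]`:
`d²(P,Q_t) + d²(S,Q_{1−t}) ≤ d_{PQ}² + d_{RS}² + t(d_{SP}² − d_{QR}²) + 2t²d_{QR}²
  − t[s(d_{SP}−d_{QR})² + (1−s)(d_{RS}−d_{PQ})²]`. -/
theorem cat0_quadrilateral_endpoint_estimate {N : Type*} [MetricSpace N] [CompleteSpace N]
    (hN : IsCAT0 N) (P Q R S : N) (gQR : ℝ → N) (hQR : IsGeodesic gQR Q R)
    (t s : ℝ) (ht : t ∈ Set.Icc (0:ℝ) 1) (hs : s ∈ Set.Icc (0:ℝ) 1) :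
    dist P (gQR t) ^ 2 + dist S (gQR (1 - t)) ^ 2 ≤
      dist P Q ^ 2 + dist R S ^ 2 + t * (dist S P ^ 2 - dist Q R ^ 2)
        + 2 * t ^ 2 * dist Q R ^ 2
        - t * (s * (dist S P - dist Q R) ^ 2 + (1 - s) * (dist R S - dist P Q) ^ 2) := by
  obtain ⟨ht0, ht1⟩ := ht
  obtain ⟨hs0, hs1⟩ := hs
  have hP := hN.dist_sq_le hQR P ⟨ht0, ht1⟩
  have hS := hN.dist_sq_le hQR S (t := 1 - t) ⟨by linarith, by linarith⟩
  have hPQRS := mul_le_mul_of_nonneg_left (hN.dist_sq_add_dist_sq_le P Q R S) hs0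
  have hQRSP := mul_le_mul_of_nonneg_left (hN.dist_sq_add_dist_sq_le Q R S P) (sub_nonneg.2 hs1)
  simp only [dist_comm S, dist_comm R P, dist_comm Q P] at hS hPQRS hQRSP ⊢
  have hdiag : dist P R ^ 2 + dist Q S ^ 2 - dist P Q ^ 2 - dist R S ^ 2 ≤
      dist P S ^ 2 + dist Q R ^ 2
        - (s * (dist P S - dist Q R) ^ 2 + (1 - s) * (dist R S - dist P Q) ^ 2) := by
    linarith
  linarith [mul_le_mul_of_nonneg_left hdiag ht0]
end

section
/- Let Ω ⊂ ℝ^m be open and bounded, let X_1,...,X_k be smooth vector fields on a neighborhood of Ω̄, and let u, u_w : Ω → ℝ be functions in the horizontal Sobolev space (i.e., u, u_w ∈ L²(Ω) with X_j u, X_j u_w ∈ L²(Ω) for all j) each minimizing the horizontal energy ∫_Ω Σ_j |X_j v|² among competitors with their respective boundary values. Then for every nonnegative η ∈ C_0^∞(Ω): ∫_Ω Σ_j X_j η · X_j((u − u_w)²) + 2 ∫_Ω η Σ_j |X_j(u − u_w)|² ≤ 0; i.e., (u−u_w)² is a weak subsolution of H f + 2|X(u−u_w)|² ≤ 0, where H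 = Σ_j X_j* X_j. -/
open MeasureTheory

/-- The horizontal energy `∫_Ω Σ_j |X_j v|²` of a function `v` with respect to the
vector fields `X_1, …, X_k` (here `X_j v (x) = dv_x(X_j(x))`). -/
noncomputable def horizEnergy {m k : ℕ} (Ω : Set (Fin m → ℝ))
    (X : Fin k → (Fin m → ℝ) → (Fin m → ℝ)) (v : (Fin m → ℝ) → ℝ) : ℝ :=
  ∫ x in Ω, ∑ j, (fderiv ℝ v x (X j x)) ^ 2

/-- `v` minimizes the horizontal energy on `Ω` among competitors with the same boundary
values (i.e. among differentiable functions differing from `v` on a compact subset of `Ω`). -/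
def IsHorizMinimizer {m k : ℕ} (Ω : Set (Fin m → ℝ))
    (X : Fin k → (Fin m → ℝ) → (Fin m → ℝ)) (v : (Fin m → ℝ) → ℝ) : Prop :=
  ∀ w : (Fin m → ℝ) → ℝ, Differentiable ℝ w →
    IsCompact (tsupport (fun x => w x - v x)) → tsupport (fun x => w x - v x) ⊆ Ω →
      horizEnergy Ω X v ≤ horizEnergy Ω X w

private lemma meas_fderiv_apply' {m : ℕ} (f : (Fin m → ℝ) → ℝ) {g : (Fin m → ℝ) → (Fin m → ℝ)}
    (hg : Continuous g) : Measurable (fun x => fderiv ℝ f x (g x)) := by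
  have h1 : Measurable fun x => (fderiv ℝ f x, g x) :=
    (measurable_fderiv ℝ f).prodMk hg.measurable
  exact (isBoundedBilinearMap_apply.continuous.measurable).comp h1

private lemma mul_int' {m : ℕ} {S : Set (Fin m → ℝ)} {f g : (Fin m → ℝ) → ℝ}
    (hf : Measurable f) (hg : Measurable g)
    (hf2 : IntegrableOn (fun x => f x ^ 2) S volume)
    (hg2 : IntegrableOn (fun x => g x ^ 2) S volume) :
    IntegrableOn (fun x => f x * g x) S volume := by
  refine ((hf2.add hg2).div_const 2).mono' ((hf.mul hg).aestronglyMeasurable) ?_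
  refine Filter.Eventually.of_forall fun x => ?_
  simp only [Pi.add_apply]
  rw [Real.norm_eq_abs, abs_mul]
  nlinarith [sq_nonneg (|f x| - |g x|), sq_abs (f x), sq_abs (g x), abs_nonneg (f x),
    abs_nonneg (g x)]

private lemma eq_zero_of_quad' {I J : ℝ} (hJ : 0 ≤ J)
    (key : ∀ t : ℝ, 0 ≤ 2 * t * I + t ^ 2 * J) : I = 0 := by
  have h1 := key (-(I / (J + 1)))
  have hJ1 : (0:ℝ) < J + 1 := by linarith
  have h3 : 2 * (-(I / (J + 1))) * I + (-(I / (J + 1))) ^ 2 * J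
      = (I ^ 2 * (-(J + 2))) / (J + 1) ^ 2 := by
    field_simp
    ring
  rw [h3] at h1
  have h4 : 0 ≤ I ^ 2 * (-(J + 2)) := by
    by_contra h
    push_neg at h
    have := div_neg_of_neg_of_pos h (by positivity : (0:ℝ) < (J + 1) ^ 2)
    linarith
  nlinarith [sq_nonneg I]

/-- If `u` and `u_w` are horizontal-energy minimizers (with their respective boundary
values, with square-integrable horizontal gradients), then `(u − u_w)²` is a weak
subsolution of `H f + 2|X(u − u_w)|² ≤ 0`, where `H = Σ_j X_j^* X_j`: for every
nonnegative `η ∈ C_0^∞(Ω)`,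
`∫_Ω Σ_j X_jη · X_j((u−u_w)²) + 2∫_Ω η Σ_j |X_j(u−u_w)|² ≤ 0`. -/
theorem subelliptic_harmonic_difference_subsolution {m k : ℕ}
    (Ω : Set (Fin m → ℝ)) (hΩ : IsOpen Ω) (hΩb : Bornology.IsBounded Ω)
    (X : Fin k → (Fin m → ℝ) → (Fin m → ℝ)) (hX : ∀ j, ContDiff ℝ (⊤ : ℕ∞) (X j))
    (u uw : (Fin m → ℝ) → ℝ) (hu : Differentiable ℝ u) (huw : Differentiable ℝ uw)
    (huL2 : IntegrableOn (fun x => (u x) ^ 2) Ω volume)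
    (huwL2 : IntegrableOn (fun x => (uw x) ^ 2) Ω volume)
    (hXu : ∀ j, IntegrableOn (fun x => (fderiv ℝ u x (X j x)) ^ 2) Ω volume)
    (hXuw : ∀ j, IntegrableOn (fun x => (fderiv ℝ uw x (X j x)) ^ 2) Ω volume)
    (humin : IsHorizMinimizer Ω X u) (huwmin : IsHorizMinimizer Ω X uw)
    (η : (Fin m → ℝ) → ℝ) (hη : ContDiff ℝ (⊤ : ℕ∞) η) (hηc : HasCompactSupport η)
    (hηΩ : tsupport η ⊆ Ω) (hηpos : ∀ x, 0 ≤ η x) :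
    (∫ x in Ω, ∑ j, (fderiv ℝ η x (X j x)) *
        (fderiv ℝ (fun y => (u y - uw y) ^ 2) x (X j x)))
      + 2 * ∫ x in Ω, η x * ∑ j, (fderiv ℝ (fun y => u y - uw y) x (X j x)) ^ 2 ≤ 0 := by
  classical
  have hXc : ∀ j, Continuous (X j) := fun j => (hX j).continuous
  have hηd : Differentiable ℝ η := hη.differentiable (by simp)
  set d : (Fin m → ℝ) → ℝ := fun y => u y - uw y with hd_def
  have hd : Differentiable ℝ d := hu.sub huw
  set φ : (Fin m → ℝ) → ℝ := fun y => η y * d y with hφ_def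
  have hφ : Differentiable ℝ φ := hηd.mul hd
  -- pointwise derivative identities
  have hfder_d : ∀ x, fderiv ℝ d x = fderiv ℝ u x - fderiv ℝ uw x := fun x =>
    fderiv_sub (hu x) (huw x)
  have hb : ∀ (j : Fin k) (x : Fin m → ℝ), fderiv ℝ φ x (X j x)
      = η x * fderiv ℝ d x (X j x) + d x * fderiv ℝ η x (X j x) := by
    intro j x
    have : fderiv ℝ φ x = η x • fderiv ℝ d x + d x • fderiv ℝ η x := by
      rw [hφ_def]
      exact fderiv_mul (hηd x) (hd x)
    rw [this]
    simp [smul_eq_mul]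
  have hsq : ∀ (j : Fin k) (x : Fin m → ℝ),
      fderiv ℝ (fun y => (u y - uw y) ^ 2) x (X j x)
        = 2 * d x * fderiv ℝ d x (X j x) := by
    intro j x
    have h1 : (fun y => (u y - uw y) ^ 2) = fun y => d y * d y := by
      funext y; simp only [hd_def]; ring
    rw [h1, fderiv_fun_mul (hd x) (hd x)]
    simp [smul_eq_mul]
    ring
  -- support of competitors
  have hsupp : ∀ (t : ℝ) (v : (Fin m → ℝ) → ℝ),
      tsupport (fun x => (v x + t * φ x) - v x) ⊆ tsupport η := by
    intro t v
    apply closure_mono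
    intro x hx
    simp only [Function.mem_support] at hx ⊢
    intro h0
    apply hx
    simp only [hφ_def, h0]
    ring
  have hmin_key : ∀ (v : (Fin m → ℝ) → ℝ), Differentiable ℝ v → IsHorizMinimizer Ω X v →
      ∀ t : ℝ, horizEnergy Ω X v ≤ horizEnergy Ω X (fun x => v x + t * φ x) := by
    intro v hv hvmin t
    refine hvmin _ (hv.add (hφ.const_mul t)) ?_ ?_
    · exact IsCompact.of_isClosed_subset hηc (isClosed_tsupport _) (hsupp t v)
    · exact (hsupp t v).trans hηΩ
  -- measurability
  have hmu : ∀ j, Measurable fun x => fderiv ℝ u x (X j x) :=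
    fun j => meas_fderiv_apply' u (hXc j)
  have hmuw : ∀ j, Measurable fun x => fderiv ℝ uw x (X j x) :=
    fun j => meas_fderiv_apply' uw (hXc j)
  have hmd : ∀ j, Measurable fun x => fderiv ℝ d x (X j x) :=
    fun j => meas_fderiv_apply' d (hXc j)
  have hmφ : ∀ j, Measurable fun x => fderiv ℝ φ x (X j x) :=
    fun j => meas_fderiv_apply' φ (hXc j)
  have heC : ∀ j, Continuous fun x => fderiv ℝ η x (X j x) := fun j =>
    isBoundedBilinearMap_apply.continuous.comp
      ((hη.continuous_fderiv (by simp)).prodMk (hXc j))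
  -- bounds on η and its horizontal gradient
  obtain ⟨C₁, hC₁⟩ := hηc.exists_bound_of_continuous hη.continuous
  have hec : ∀ j, HasCompactSupport fun x => fderiv ℝ η x (X j x) := by
    intro j
    refine HasCompactSupport.mono (hηc.fderiv ℝ) ?_
    intro x hx
    simp only [Function.mem_support] at hx ⊢
    intro h0
    exact hx (by rw [h0]; simp)
  have hC₂ : ∀ j, ∃ C : ℝ, ∀ x, |fderiv ℝ η x (X j x)| ≤ C := by
    intro j
    obtain ⟨C, hC⟩ := (hec j).exists_bound_of_continuous (heC j)
    exact ⟨C, fun x => by simpa [Real.norm_eq_abs] using hC x⟩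
  choose C₂ hC₂ using hC₂
  -- integrability facts
  have hdc : Continuous d := hd.continuous
  have hd2 : IntegrableOn (fun x => d x ^ 2) Ω volume := by
    refine ((huL2.add huwL2).const_mul 2).mono'
      ((hdc.pow 2).aestronglyMeasurable) ?_
    refine Filter.Eventually.of_forall fun x => ?_
    simp only [Pi.add_apply]
    rw [Real.norm_eq_abs, abs_of_nonneg (sq_nonneg _)]
    simp only [hd_def]
    nlinarith [sq_nonneg (u x + uw x)]
  have hc2 : ∀ j, IntegrableOn (fun x => (fderiv ℝ d x (X j x)) ^ 2) Ω volume := by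
    intro j
    refine (((hXu j).add (hXuw j)).const_mul 2).mono'
      (((hmd j).pow_const 2).aestronglyMeasurable) ?_
    refine Filter.Eventually.of_forall fun x => ?_
    simp only [Pi.add_apply]
    rw [Real.norm_eq_abs, abs_of_nonneg (sq_nonneg _), hfder_d x,
      ContinuousLinearMap.sub_apply]
    nlinarith [sq_nonneg (fderiv ℝ u x (X j x) + fderiv ℝ uw x (X j x))]
  have hb2 : ∀ j, IntegrableOn (fun x => (fderiv ℝ φ x (X j x)) ^ 2) Ω volume := by
    intro j
    have hint : Integrable (fun x => 2 * C₁ ^ 2 * (fderiv ℝ d x (X j x)) ^ 2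
        + 2 * (C₂ j) ^ 2 * (d x) ^ 2) (volume.restrict Ω) :=
      ((hc2 j).const_mul _).add (hd2.const_mul _)
    refine hint.mono' (((hmφ j).pow_const 2).aestronglyMeasurable) ?_
    refine Filter.Eventually.of_forall fun x => ?_
    rw [Real.norm_eq_abs, abs_of_nonneg (sq_nonneg _), hb j x]
    have h1 := hC₁ x
    rw [Real.norm_eq_abs] at h1
    have h2 := hC₂ j x
    have hη2 : (η x) ^ 2 ≤ C₁ ^ 2 := by nlinarith [abs_nonneg (η x), sq_abs (η x)]
    have he2 : (fderiv ℝ η x (X j x)) ^ 2 ≤ (C₂ j) ^ 2 := by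
      nlinarith [abs_nonneg (fderiv ℝ η x (X j x)), sq_abs (fderiv ℝ η x (X j x))]
    nlinarith [sq_nonneg (η x * fderiv ℝ d x (X j x) - d x * fderiv ℝ η x (X j x)),
      mul_nonneg (sub_nonneg.mpr hη2) (sq_nonneg (fderiv ℝ d x (X j x))),
      mul_nonneg (sub_nonneg.mpr he2) (sq_nonneg (d x))]
  have hab : ∀ j, IntegrableOn
      (fun x => fderiv ℝ u x (X j x) * fderiv ℝ φ x (X j x)) Ω volume :=
    fun j => mul_int' (hmu j) (hmφ j) (hXu j) (hb2 j)
  have ha'b : ∀ j, IntegrableOn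
      (fun x => fderiv ℝ uw x (X j x) * fderiv ℝ φ x (X j x)) Ω volume :=
    fun j => mul_int' (hmuw j) (hmφ j) (hXuw j) (hb2 j)
  have hde2 : ∀ j, IntegrableOn (fun x => (d x * fderiv ℝ η x (X j x)) ^ 2) Ω volume := by
    intro j
    refine (hd2.const_mul ((C₂ j) ^ 2)).mono'
      (((hdc.measurable.mul (heC j).measurable).pow_const 2).aestronglyMeasurable) ?_
    refine Filter.Eventually.of_forall fun x => ?_
    rw [Real.norm_eq_abs, abs_of_nonneg (sq_nonneg _)]
    have h2 := hC₂ j x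
    have he2 : (fderiv ℝ η x (X j x)) ^ 2 ≤ (C₂ j) ^ 2 := by
      nlinarith [abs_nonneg (fderiv ℝ η x (X j x)), sq_abs (fderiv ℝ η x (X j x))]
    nlinarith [sq_nonneg (d x), mul_nonneg (sub_nonneg.mpr he2) (sq_nonneg (d x))]
  have hdec : ∀ j, IntegrableOn
      (fun x => (d x * fderiv ℝ η x (X j x)) * fderiv ℝ d x (X j x)) Ω volume :=
    fun j => mul_int' (hdc.measurable.mul (heC j).measurable) (hmd j) (hde2 j) (hc2 j)
  have hI1int : IntegrableOn (fun x => η x * ∑ j, (fderiv ℝ d x (X j x)) ^ 2) Ω volume := by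
    have hbound : Integrable (fun x => C₁ * ∑ j, (fderiv ℝ d x (X j x)) ^ 2)
        (volume.restrict Ω) := (integrable_finset_sum _ fun j _ => hc2 j).const_mul C₁
    refine hbound.mono'
      ((hη.continuous.measurable.mul
        (Finset.measurable_sum _ fun j _ => (hmd j).pow_const 2)).aestronglyMeasurable) ?_
    refine Filter.Eventually.of_forall fun x => ?_
    rw [Real.norm_eq_abs, abs_mul]
    have h1 := hC₁ x
    rw [Real.norm_eq_abs] at h1
    have hs : 0 ≤ ∑ j, (fderiv ℝ d x (X j x)) ^ 2 :=
      Finset.sum_nonneg fun j _ => sq_nonneg _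
    rw [abs_of_nonneg hs]
    exact mul_le_mul_of_nonneg_right h1 hs
  have hI2int : IntegrableOn
      (fun x => ∑ j, (d x * fderiv ℝ η x (X j x)) * fderiv ℝ d x (X j x)) Ω volume :=
    integrable_finset_sum _ fun j _ => hdec j
  have hJint : IntegrableOn (fun x => ∑ j, (fderiv ℝ φ x (X j x)) ^ 2) Ω volume :=
    integrable_finset_sum _ fun j _ => hb2 j
  have hJnn : 0 ≤ ∫ x in Ω, ∑ j, (fderiv ℝ φ x (X j x)) ^ 2 :=
    setIntegral_nonneg hΩ.measurableSet fun x _ =>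
      Finset.sum_nonneg fun j _ => sq_nonneg _
  -- energy expansion
  have hexpand : ∀ (v : (Fin m → ℝ) → ℝ), Differentiable ℝ v →
      (∀ j, IntegrableOn (fun x => (fderiv ℝ v x (X j x)) ^ 2) Ω volume) →
      (∀ j, Measurable fun x => fderiv ℝ v x (X j x)) →
      ∀ t : ℝ,
      horizEnergy Ω X (fun x => v x + t * φ x)
        = horizEnergy Ω X v
          + (2 * t * (∫ x in Ω, ∑ j, fderiv ℝ v x (X j x) * fderiv ℝ φ x (X j x))
          + t ^ 2 * (∫ x in Ω, ∑ j, (fderiv ℝ φ x (X j x)) ^ 2)) := by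
    intro v hv hv2 hvm t
    have hpt : ∀ x, (∑ j, (fderiv ℝ (fun y => v y + t * φ y) x (X j x)) ^ 2)
        = (∑ j, (fderiv ℝ v x (X j x)) ^ 2)
          + ((2 * t) * (∑ j, fderiv ℝ v x (X j x) * fderiv ℝ φ x (X j x))
          + t ^ 2 * (∑ j, (fderiv ℝ φ x (X j x)) ^ 2)) := by
      intro x
      have hder : ∀ j : Fin k, fderiv ℝ (fun y => v y + t * φ y) x (X j x)
          = fderiv ℝ v x (X j x) + t * fderiv ℝ φ x (X j x) := by
        intro j
        rw [fderiv_fun_add (hv x) ((hφ x).const_mul t), fderiv_const_mul (hφ x) t]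
        simp [smul_eq_mul]
      simp only [hder]
      rw [Finset.mul_sum, Finset.mul_sum, ← Finset.sum_add_distrib,
        ← Finset.sum_add_distrib]
      exact Finset.sum_congr rfl fun j _ => by ring
    have hA : Integrable (fun x => ∑ j, (fderiv ℝ v x (X j x)) ^ 2)
        (volume.restrict Ω) := integrable_finset_sum _ fun j _ => hv2 j
    have hB : Integrable
        (fun x => (2 * t) * ∑ j, fderiv ℝ v x (X j x) * fderiv ℝ φ x (X j x))
        (volume.restrict Ω) :=
      (integrable_finset_sum _ fun j _ => mul_int' (hvm j) (hmφ j) (hv2 j)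
        (hb2 j)).const_mul (2 * t)
    have hC : Integrable (fun x => t ^ 2 * ∑ j, (fderiv ℝ φ x (X j x)) ^ 2)
        (volume.restrict Ω) := hJint.const_mul (t ^ 2)
    have hBC : Integrable
        (fun x => (2 * t) * (∑ j, fderiv ℝ v x (X j x) * fderiv ℝ φ x (X j x))
          + t ^ 2 * ∑ j, (fderiv ℝ φ x (X j x)) ^ 2) (volume.restrict Ω) := hB.add hC
    unfold horizEnergy
    rw [integral_congr_ae (Filter.Eventually.of_forall hpt), integral_add hA hBC,
      integral_add hB hC, integral_const_mul, integral_const_mul]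
  -- first variation vanishes for each minimizer
  have hIu : (∫ x in Ω, ∑ j, fderiv ℝ u x (X j x) * fderiv ℝ φ x (X j x)) = 0 := by
    apply eq_zero_of_quad' hJnn
    intro t
    have h1 := hmin_key u hu humin t
    rw [hexpand u hu hXu hmu t] at h1
    linarith
  have hIuw : (∫ x in Ω, ∑ j, fderiv ℝ uw x (X j x) * fderiv ℝ φ x (X j x)) = 0 := by
    apply eq_zero_of_quad' hJnn
    intro t
    have h1 := hmin_key uw huw huwmin t
    rw [hexpand uw huw hXuw hmuw t] at h1
    linarith
  have hcbz : (∫ x in Ω, ∑ j, fderiv ℝ d x (X j x) * fderiv ℝ φ x (X j x)) = 0 := by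
    have h1 : (fun x => ∑ j, fderiv ℝ d x (X j x) * fderiv ℝ φ x (X j x))
        = fun x => (∑ j, fderiv ℝ u x (X j x) * fderiv ℝ φ x (X j x))
          - (∑ j, fderiv ℝ uw x (X j x) * fderiv ℝ φ x (X j x)) := by
      funext x
      rw [← Finset.sum_sub_distrib]
      refine Finset.sum_congr rfl fun j _ => ?_
      rw [hfder_d x, ContinuousLinearMap.sub_apply]
      ring
    rw [h1, integral_sub (integrable_finset_sum _ fun j _ => hab j)
      (integrable_finset_sum _ fun j _ => ha'b j), hIu, hIuw, sub_zero]
  -- split the vanishing integral into the two pieces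
  have hsplit : (∫ x in Ω, η x * ∑ j, (fderiv ℝ d x (X j x)) ^ 2)
      + (∫ x in Ω, ∑ j, (d x * fderiv ℝ η x (X j x)) * fderiv ℝ d x (X j x)) = 0 := by
    have heq : ∀ x, η x * (∑ j, (fderiv ℝ d x (X j x)) ^ 2)
        + (∑ j, (d x * fderiv ℝ η x (X j x)) * fderiv ℝ d x (X j x))
        = ∑ j, fderiv ℝ d x (X j x) * fderiv ℝ φ x (X j x) := by
      intro x
      simp only [hb]
      rw [Finset.mul_sum, ← Finset.sum_add_distrib]
      exact Finset.sum_congr rfl fun j _ => by ring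
    calc (∫ x in Ω, η x * ∑ j, (fderiv ℝ d x (X j x)) ^ 2)
          + (∫ x in Ω, ∑ j, (d x * fderiv ℝ η x (X j x)) * fderiv ℝ d x (X j x))
        = ∫ x in Ω, (η x * (∑ j, (fderiv ℝ d x (X j x)) ^ 2)
            + (∑ j, (d x * fderiv ℝ η x (X j x)) * fderiv ℝ d x (X j x))) :=
          (integral_add hI1int hI2int).symm
      _ = ∫ x in Ω, ∑ j, fderiv ℝ d x (X j x) * fderiv ℝ φ x (X j x) :=
          integral_congr_ae (Filter.Eventually.of_forall heq)
      _ = 0 := hcbz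
  -- identify the first integral in the goal
  have h1 : (∫ x in Ω, ∑ j, (fderiv ℝ η x (X j x)) *
        (fderiv ℝ (fun y => (u y - uw y) ^ 2) x (X j x)))
      = 2 * ∫ x in Ω, ∑ j, (d x * fderiv ℝ η x (X j x)) * fderiv ℝ d x (X j x) := by
    rw [← integral_const_mul]
    refine integral_congr_ae (Filter.Eventually.of_forall fun x => ?_)
    simp only [hsq]
    rw [Finset.mul_sum]
    exact Finset.sum_congr rfl fun j _ => by ring
  rw [h1]
  linarith [hsplit]
end
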